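/- arXiv:2412.11806 — 2 statements merged into one kernel-verified Lean document; each statement's English description precedes it below -/
import Mathlib

section
/- For the sequence x_0 = 1, x_{k+1} = x_k + sqrt(1 + 1/x_k), one has k + 1 ≤ x_k and x_k / k → 1 as k → ∞. -/
open Filter Topology Finset

/-
Each increment √(1 + 1/x_k) is at least 1, which gives x_k ≥ k + 1 by induction. Hence
x_k → ∞, the increments tend to 1, and x_k / k, being essentially the Cesàro mean of the
increments, tends to 1 as well.
-/

theorem add_one_le_of_add_one_le_succ {x : ℕ → ℝ} (h0 : 1 ≤ x 0)
    (hstep : ∀ k, 1 ≤ x k → x k + 1 ≤ x (k + 1)) (k : ℕ) : (k : ℝ) + 1 ≤ x k := by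
  induction k with
  | zero => simpa using h0
  | succ k ih =>
    have := hstep k (by linarith [k.cast_nonneg (α := ℝ)])
    push_cast
    linarith

theorem tendsto_div_natCast_of_tendsto_sub {u : ℕ → ℝ} {L : ℝ}
    (h : Tendsto (fun k => u (k + 1) - u k) atTop (𝓝 L)) :
    Tendsto (fun k : ℕ => u k / k) atTop (𝓝 L) := by
  have hmean := (tendsto_const_nhds (x := u 0)).div_atTop tendsto_natCast_atTop_atTop
    |>.add h.cesaro
  rw [zero_add] at hmean
  refine hmean.congr' ?_
  filter_upwards [eventually_ne_atTop 0] with k hk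
  rw [sum_range_sub, ← inv_mul_eq_div]
  field_simp
  ring

theorem tendsto_sqrt_one_add_one_div_atTop {α : Type*} {l : Filter α} {f : α → ℝ}
    (hf : Tendsto f l atTop) : Tendsto (fun a => Real.sqrt (1 + 1 / f a)) l (𝓝 1) := by
  have hinv : Tendsto (fun a => 1 + 1 / f a) l (𝓝 1) := by
    simpa using (tendsto_inv_atTop_zero.comp hf).const_add 1
  simpa using hinv.sqrt

theorem stmt_11 (x : ℕ → ℝ)
    (h0 : x 0 = 1)
    (hrec : ∀ k, x (k + 1) = x k + Real.sqrt (1 + 1 / x k)) :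
    (∀ k : ℕ, (k : ℝ) + 1 ≤ x k) ∧
      Tendsto (fun k : ℕ => x k / (k : ℝ)) atTop (nhds 1) := by
  have hlower : ∀ k : ℕ, (k : ℝ) + 1 ≤ x k := by
    refine add_one_le_of_add_one_le_succ h0.ge fun k hk => ?_
    have : 1 ≤ Real.sqrt (1 + 1 / x k) :=
      Real.one_le_sqrt.mpr (le_add_of_nonneg_right (by positivity))
    linarith [hrec k]
  have hatTop : Tendsto x atTop atTop :=
    tendsto_atTop_mono hlower (tendsto_natCast_atTop_atTop.atTop_add tendsto_const_nhds)
  refine ⟨hlower, tendsto_div_natCast_of_tendsto_sub ?_⟩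
  simpa [hrec] using tendsto_sqrt_one_add_one_div_atTop hatTop
end

section
/- For the sequence y_0 = 1, y_{k+1} = y_k * exp(-sqrt(y_k)), the sequence is positive, strictly decreasing, converges to 0, and k^2 * y_k → 4 as k → ∞. -/
/-!
The sequence decreases to the only fixed point `0` of `x ↦ x e^{-√x}` on `[0, ∞)`. With
`u_k = 1 / √y_k` one has `√y_{k+1} = √y_k e^{-√y_k / 2}`, so `u_{k+1} - u_k = (e^{s/2} - 1) / s`
with `s = √y_k → 0`, which tends to `1/2`. By Cesàro, `u_k / k → 1/2`, i.e. `k² y_k = (k / u_k)² → 4`.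
-/

open Filter Topology

lemma Real.tendsto_exp_sub_one_div :
    Tendsto (fun x : ℝ => (Real.exp x - 1) / x) (𝓝[≠] 0) (𝓝 1) := by
  have h := hasDerivAt_iff_tendsto_slope.1 (Real.hasDerivAt_exp 0)
  simpa [slope_fun_def, div_eq_inv_mul] using h

lemma Filter.Tendsto.div_natCast_of_tendsto_succ_sub {u : ℕ → ℝ} {l : ℝ}
    (h : Tendsto (fun n => u (n + 1) - u n) atTop (𝓝 l)) :
    Tendsto (fun n : ℕ => u n / n) atTop (𝓝 l) := by
  have hmean : Tendsto (fun n : ℕ => (n : ℝ)⁻¹ * (u n - u 0)) atTop (𝓝 l) := by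
    simpa only [Finset.sum_range_sub] using h.cesaro
  have hinit : Tendsto (fun n : ℕ => (n : ℝ)⁻¹ * u 0) atTop (𝓝 0) := by
    simpa using tendsto_inv_atTop_nhds_zero_nat.mul_const (u 0)
  simpa [div_eq_inv_mul, mul_sub] using hmean.add hinit

lemma eq_zero_of_mul_exp_neg_sqrt_eq {x : ℝ} (hx : 0 ≤ x) (h : x * Real.exp (-√x) = x) :
    x = 0 := by
  by_contra hne
  have hexp : Real.exp (-√x) = 1 := by
    simpa using mul_left_cancel₀ hne (h.trans (mul_one x).symm)
  rw [Real.exp_eq_one_iff, neg_eq_zero, Real.sqrt_eq_zero hx] at hexp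
  exact hne hexp

lemma inv_sqrt_mul_exp_neg_sqrt_sub {x : ℝ} (hx : 0 < x) :
    (√(x * Real.exp (-√x)))⁻¹ - (√x)⁻¹ = (Real.exp (√x / 2) - 1) / (√x / 2) / 2 := by
  have hs : 0 < √x := Real.sqrt_pos.2 hx
  rw [Real.sqrt_mul hx.le, ← Real.exp_half, mul_inv, ← Real.exp_neg, neg_div, neg_neg]
  field_simp

section ExpSqrtRecursion

variable {y : ℕ → ℝ} (hrec : ∀ k, y (k + 1) = y k * Real.exp (-√(y k)))
include hrec

lemma pos_of_exp_sqrt_rec (h0 : 0 < y 0) (k : ℕ) : 0 < y k := by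
  induction k with
  | zero => exact h0
  | succ k ih => rw [hrec]; positivity

lemma strictAnti_of_exp_sqrt_rec (hpos : ∀ k, 0 < y k) : StrictAnti y := by
  refine strictAnti_nat_of_succ_lt fun k => ?_
  rw [hrec]
  have hexp : Real.exp (-√(y k)) < 1 :=
    Real.exp_lt_one_iff.2 (neg_neg_of_pos (Real.sqrt_pos.2 (hpos k)))
  simpa using mul_lt_mul_of_pos_left hexp (hpos k)

lemma tendsto_zero_of_exp_sqrt_rec (hpos : ∀ k, 0 < y k) : Tendsto y atTop (𝓝 0) := by
  have hbdd : BddBelow (Set.range y) := ⟨0, by rintro _ ⟨k, rfl⟩; exact (hpos k).le⟩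
  obtain ⟨L, hL, hlim⟩ : ∃ L, 0 ≤ L ∧ Tendsto y atTop (𝓝 L) :=
    ⟨_, le_ciInf fun k => (hpos k).le,
      tendsto_atTop_ciInf (strictAnti_of_exp_sqrt_rec hrec hpos).antitone hbdd⟩
  have hcont : Continuous fun x : ℝ => x * Real.exp (-√x) := by fun_prop
  have hfix : L * Real.exp (-√L) = L := by
    refine tendsto_nhds_unique ((hcont.tendsto L).comp hlim) ?_
    simpa only [Function.comp_def, ← hrec] using hlim.comp (tendsto_add_atTop_nat 1)
  rwa [eq_zero_of_mul_exp_neg_sqrt_eq hL hfix] at hlim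

lemma tendsto_inv_sqrt_succ_sub_of_exp_sqrt_rec (hpos : ∀ k, 0 < y k) :
    Tendsto (fun k => (√(y (k + 1)))⁻¹ - (√(y k))⁻¹) atTop (𝓝 (1 / 2)) := by
  have hhalf : Tendsto (fun k => √(y k) / 2) atTop (𝓝[≠] 0) := by
    refine tendsto_nhdsWithin_iff.2 ⟨?_, Eventually.of_forall fun k => ?_⟩
    · simpa using ((Real.continuous_sqrt.tendsto 0).comp
        (tendsto_zero_of_exp_sqrt_rec hrec hpos)).div_const 2
    · exact (div_pos (Real.sqrt_pos.2 (hpos k)) two_pos).ne'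
  simpa only [hrec, inv_sqrt_mul_exp_neg_sqrt_sub (hpos _), Function.comp_def] using
    (Real.tendsto_exp_sub_one_div.comp hhalf).div_const 2

lemma tendsto_natCast_sq_mul_of_exp_sqrt_rec (hpos : ∀ k, 0 < y k) :
    Tendsto (fun k : ℕ => (k : ℝ) ^ 2 * y k) atTop (𝓝 4) := by
  have hu := (tendsto_inv_sqrt_succ_sub_of_exp_sqrt_rec hrec hpos).div_natCast_of_tendsto_succ_sub
    (u := fun k => (√(y k))⁻¹)
  convert (hu.inv₀ (by norm_num)).pow 2 using 2 with k
  · rw [inv_div, div_inv_eq_mul, mul_pow, Real.sq_sqrt (hpos k).le]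
  · norm_num

end ExpSqrtRecursion

theorem stmt_15 (y : ℕ → ℝ)
    (h0 : y 0 = 1)
    (hrec : ∀ k, y (k + 1) = y k * Real.exp (-Real.sqrt (y k))) :
    (∀ k, 0 < y k) ∧ StrictAnti y ∧ Tendsto y atTop (nhds 0) ∧
      Tendsto (fun k : ℕ => (k : ℝ) ^ 2 * y k) atTop (nhds 4) := by
  have hpos := pos_of_exp_sqrt_rec hrec (h0 ▸ one_pos)
  exact ⟨hpos, strictAnti_of_exp_sqrt_rec hrec hpos, tendsto_zero_of_exp_sqrt_rec hrec hpos,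
    tendsto_natCast_sq_mul_of_exp_sqrt_rec hrec hpos⟩
end
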